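/- Let d = (66,56,45,39,16,15,8,7,3) and d′ = (64,60,42,39,20,11,9,7,3) (both of length r = 9), obtained by appending a degree 7 to the multidegrees (66,56,45,39,16,15,8,3) and (64,60,42,39,20,11,9,3). Then D(d) = D(d′) = 261534873600, but e_5(d) = 261534873600·(−33795490160) ≠ 261534873600·(−33795524864) = e_5(d′); in particular e_5(d) ≠ e_5(d′). -/

import Mathlib

/-- Power sum `s_k(d) = d_1^k + ⋯ + d_r^k` of a multidegree. -/
def powerSum (k : ℕ) (d : List ℕ) : ℕ := (d.map (· ^ k)).sum

/-- Total degree `D(d) = d_1 ⋯ d_r` of a multidegree. -/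
def totalDegree (d : List ℕ) : ℕ := d.prod

/-- First Pontrjagin class `p_1(d) = 6 + r - s_2` of `X_5(d)` (as a multiple of `x^2`). -/
def p1 (d : List ℕ) : ℚ := 6 + (d.length : ℚ) - (powerSum 2 d : ℚ)

/-- Second Pontrjagin class `p_2(d) = ((6 + r - s_2)^2 - (6 + r - s_4))/2` of `X_5(d)`. -/
def p2 (d : List ℕ) : ℚ :=
  ((6 + (d.length : ℚ) - (powerSum 2 d : ℚ)) ^ 2
    - (6 + (d.length : ℚ) - (powerSum 4 d : ℚ))) / 2

/-- Euler characteristic of the 5-dimensional complete intersection `X_5(d)`. -/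
def e5 (d : List ℕ) : ℚ :=
  let r : ℚ := d.length
  let s1 : ℚ := powerSum 1 d
  let s2 : ℚ := powerSum 2 d
  let s3 : ℚ := powerSum 3 d
  let s4 : ℚ := powerSum 4 d
  let s5 : ℚ := powerSum 5 d
  ((totalDegree d : ℚ) / 120) *
    ((6 + r - s1) ^ 5 - 10 * (6 + r - s1) ^ 3 * (6 + r - s2)
      + 20 * (6 + r - s1) ^ 2 * (6 + r - s3) - 30 * (6 + r - s1) * (6 + r - s4)
      + 15 * (6 + r - s1) * (6 + r - s2) ^ 2 - 20 * (6 + r - s2) * (6 + r - s3)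
      + 24 * (6 + r - s5))

def dA : List ℕ := [66, 56, 45, 39, 16, 15, 8, 7, 3]
def dB : List ℕ := [64, 60, 42, 39, 20, 11, 9, 7, 3]

theorem totalDegree_dA : totalDegree dA = 261534873600 := by decide

theorem totalDegree_dB : totalDegree dB = 261534873600 := by decide

theorem e5_dA : e5 dA = 261534873600 * (-33795490160) := by
  norm_num [e5, totalDegree, powerSum, dA]

theorem e5_dB : e5 dB = 261534873600 * (-33795524864) := by
  norm_num [e5, totalDegree, powerSum, dB]

theorem stmt5 :
    dA.length = 9 ∧ dB.length = 9 ∧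
    dA = [66, 56, 45, 39, 16, 15, 8] ++ [7] ++ [3] ∧
    dB = [64, 60, 42, 39, 20, 11, 9] ++ [7] ++ [3] ∧
    totalDegree dA = 261534873600 ∧ totalDegree dB = 261534873600 ∧
    e5 dA = 261534873600 * (-33795490160) ∧ e5 dB = 261534873600 * (-33795524864) ∧
    (261534873600 : ℚ) * (-33795490160) ≠ 261534873600 * (-33795524864) ∧
    e5 dA ≠ e5 dB := by
  have hne : (261534873600 : ℚ) * (-33795490160) ≠ 261534873600 * (-33795524864) := by norm_num
  exact ⟨rfl, rfl, rfl, rfl, totalDegree_dA, totalDegree_dB, e5_dA, e5_dB, hne,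
    by rwa [e5_dA, e5_dB]⟩
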